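/- arXiv:1702.06741 — 2 statements merged into one kernel-verified Lean document; each statement's English description precedes it below -/
import Mathlib

section
/- Let α : [0,1] → End(ℝ^d) be continuous, S solve S' + αS = 0 with S(0) = I, and endow the Cameron–Martin space H(ℝ^d) with the inner product ⟨h,k⟩_α = ∫₀¹ (h'+αh)·(k'+αk) dt. Let E₁ : H(ℝ^d) → ℝ^d be the endpoint map E₁h = h(1). Then the adjoint E₁* of E₁ with respect to ⟨·,·⟩_α (i.e., satisfying E₁h · a = ⟨h, E₁*a⟩_α for all h, a) is given by (E₁*a)(t) = S(t) (∫₀ᵗ (S(s)*S(s))⁻¹ ds) S(1)* a. -/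
open Matrix
open scoped Matrix.Norms.L2Operator

open Set MeasureTheory

/-!
Since `S' = -αS`, the substitution `h = S g` untwists the `α`-inner product:
`(S⁻¹ h)' = S⁻¹ (h' + α h)`. For `k = S M c` with `M t = ∫₀ᵗ (SᴴS)⁻¹` and `c = S(1)ᴴ a` this gives
`k' + α k = S (SᴴS)⁻¹ c = (S⁻¹)ᴴ c`, so the integrand `(h' + α h) ⬝ (k' + α k)` equals
`S⁻¹ (h' + α h) ⬝ c = ((S⁻¹ h) ⬝ c)'`, and the integral is `S(1)⁻¹ h(1) ⬝ S(1)ᴴ a = h(1) ⬝ a`.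

`S t` is invertible: if `S t z = 0`, then `S(·) z` solves the linear equation `y' = -α y` and
vanishes at `t`, hence on `[0, t]` by backward uniqueness, contradicting `S 0 = 1` unless `z = 0`.
The integrand is integrable because `h'` is square integrable and `|x ⬝ y| ≤ (x ⬝ x + y ⬝ y) / 2`.
-/

section Calculus

variable {m n : Type*} [Fintype m] [Fintype n] {s : Set ℝ} {x : ℝ}

theorem HasDerivWithinAt.mulVec [DecidableEq n] {A : ℝ → Matrix m n ℝ} {A' : Matrix m n ℝ}
    {w : ℝ → n → ℝ} {w' : n → ℝ} (hA : HasDerivWithinAt A A' s x) (hw : HasDerivWithinAt w w' s x) :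
    HasDerivWithinAt (fun t => A t *ᵥ w t) (A x *ᵥ w' + A' *ᵥ w x) s x :=
  (mulVecBilin ℝ ℝ : Matrix m n ℝ →ₗ[ℝ] (n → ℝ) →ₗ[ℝ] m → ℝ).toContinuousBilinearMap
    |>.hasDerivWithinAt_of_bilinear hA hw

theorem HasDerivWithinAt.dotProduct {u w : ℝ → n → ℝ} {u' w' : n → ℝ}
    (hu : HasDerivWithinAt u u' s x) (hw : HasDerivWithinAt w w' s x) :
    HasDerivWithinAt (fun t => u t ⬝ᵥ w t) (u x ⬝ᵥ w' + u' ⬝ᵥ w x) s x :=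
  (dotProductBilin ℝ ℝ : (n → ℝ) →ₗ[ℝ] (n → ℝ) →ₗ[ℝ] ℝ).toContinuousBilinearMap
    |>.hasDerivWithinAt_of_bilinear hu hw

theorem ContinuousOn.mulVec {A : ℝ → Matrix m n ℝ} {w : ℝ → n → ℝ} (hA : ContinuousOn A s)
    (hw : ContinuousOn w s) : ContinuousOn (fun t => A t *ᵥ w t) s :=
  ((mulVecBilin ℝ ℝ : Matrix m n ℝ →ₗ[ℝ] (n → ℝ) →ₗ[ℝ] m → ℝ).toContinuousBilinearMap.continuous
    |>.comp_continuousOn hA).clm_apply hw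

theorem ContinuousOn.dotProduct {u w : ℝ → n → ℝ} (hu : ContinuousOn u s)
    (hw : ContinuousOn w s) : ContinuousOn (fun t => u t ⬝ᵥ w t) s :=
  ((dotProductBilin ℝ ℝ : (n → ℝ) →ₗ[ℝ] (n → ℝ) →ₗ[ℝ] ℝ).toContinuousBilinearMap.continuous
    |>.comp_continuousOn hu).clm_apply hw

theorem hasDerivWithinAt_inv_of_neg_mul [DecidableEq n] {α S : ℝ → Matrix n n ℝ}
    (hS : HasDerivWithinAt S (-(α x * S x)) s x) (hSx : IsUnit (S x)) :
    HasDerivWithinAt (fun t => (S t)⁻¹) ((S x)⁻¹ * α x) s x := by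
  obtain ⟨u, hu⟩ := hSx
  have hinv := hasFDerivAt_ringInverse (𝕜 := ℝ) u
  rw [hu] at hinv
  simp only [nonsing_inv_eq_ringInverse]
  refine (hinv.comp_hasDerivWithinAt x hS).congr_deriv ?_
  simp [← hu, Matrix.mul_assoc]

theorem continuousOn_inv_of_hasDerivWithinAt_neg_mul [DecidableEq n] {α S : ℝ → Matrix n n ℝ}
    (hS : ∀ t ∈ s, HasDerivWithinAt S (-(α t * S t)) s t) (hSunit : ∀ t ∈ s, IsUnit (S t)) :
    ContinuousOn (fun t => (S t)⁻¹) s := fun t ht =>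
  (hasDerivWithinAt_inv_of_neg_mul (hS t ht) (hSunit t ht)).continuousWithinAt

end Calculus

section LinearODE

variable {n : Type*} [Fintype n] {a b : ℝ}

theorem eqOn_zero_of_hasDerivWithinAt_mulVec {A : ℝ → Matrix n n ℝ} {y : ℝ → n → ℝ}
    (hA : ContinuousOn A (Icc a b))
    (hy : ∀ t ∈ Icc a b, HasDerivWithinAt y (A t *ᵥ y t) (Icc a b) t) (hb : y b = 0) :
    EqOn y 0 (Icc a b) := by
  let B := (mulVecBilin ℝ ℝ : Matrix n n ℝ →ₗ[ℝ] (n → ℝ) →ₗ[ℝ] n → ℝ).toContinuousBilinearMap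
  obtain ⟨C, hC⟩ := isCompact_Icc.exists_bound_of_continuousOn (B.continuous.comp_continuousOn hA)
  have hlip : ∀ t ∈ Ioc a b, LipschitzOnWith C.toNNReal (fun z => A t *ᵥ z) univ := fun t ht =>
    ((B (A t)).lipschitz.weaken
      (NNReal.le_toNNReal_of_coe_le (hC t (Ioc_subset_Icc_self ht)))).lipschitzOnWith
  refine ODE_solution_unique_of_mem_Icc_left hlip (fun t ht => (hy t ht).continuousWithinAt)
    (fun t ht => (hy t (Ioc_subset_Icc_self ht)).mono_of_mem_nhdsWithin (Icc_mem_nhdsLE_of_mem ht))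
    (fun _ _ => mem_univ _) continuousOn_const (fun t _ => ?_) (fun _ _ => mem_univ _) hb
  exact (hasDerivWithinAt_const t (Iic t) 0).congr_deriv (by simp)

theorem isUnit_of_hasDerivWithinAt_neg_mul [DecidableEq n] {α S : ℝ → Matrix n n ℝ}
    (hα : ContinuousOn α (Icc a b))
    (hS : ∀ t ∈ Icc a b, HasDerivWithinAt S (-(α t * S t)) (Icc a b) t)
    (ha : IsUnit (S a)) {t : ℝ} (ht : t ∈ Icc a b) : IsUnit (S t) := by
  rw [← mulVec_injective_iff_isUnit] at ha ⊢
  intro z₁ z₂ hz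
  have hsub : Icc a t ⊆ Icc a b := Icc_subset_Icc_right ht.2
  have hy : EqOn (fun s => S s *ᵥ (z₁ - z₂)) 0 (Icc a t) := by
    refine eqOn_zero_of_hasDerivWithinAt_mulVec (A := fun s => -α s) (hα.neg.mono hsub)
      (fun s hs => ?_) (by simp [mulVec_sub, hz])
    refine (((hS s (hsub hs)).mono hsub).mulVec (hasDerivWithinAt_const s _ _)).congr_deriv ?_
    simp [neg_mulVec, mulVec_mulVec]
  exact sub_eq_zero.1 (ha (by simpa [mulVec_sub, sub_eq_zero] using hy (left_mem_Icc.2 ht.1)))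

end LinearODE

section FundamentalSolution

variable {n : Type*} [Fintype n] [DecidableEq n] {α S : ℝ → Matrix n n ℝ} {s : Set ℝ} {t : ℝ}

theorem hasDerivWithinAt_inv_mulVec {h : ℝ → n → ℝ} {h' : n → ℝ}
    (hS : HasDerivWithinAt S (-(α t * S t)) s t) (hSt : IsUnit (S t))
    (hh : HasDerivWithinAt h h' s t) :
    HasDerivWithinAt (fun t => (S t)⁻¹ *ᵥ h t) ((S t)⁻¹ *ᵥ (h' + α t *ᵥ h t)) s t :=
  ((hasDerivWithinAt_inv_of_neg_mul hS hSt).mulVec hh).congr_deriv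
    (by simp [mulVec_add, mulVec_mulVec])

theorem add_mulVec_eq_of_hasDerivWithinAt {g : ℝ → n → ℝ} {g' k' : n → ℝ}
    (hs : UniqueDiffWithinAt ℝ s t) (hS : HasDerivWithinAt S (-(α t * S t)) s t)
    (hg : HasDerivWithinAt g g' s t) (hk : HasDerivWithinAt (fun t => S t *ᵥ g t) k' s t) :
    k' + α t *ᵥ (S t *ᵥ g t) = S t *ᵥ g' := by
  rw [hs.eq_deriv _ hk (hS.mulVec hg)]
  simp [neg_mulVec, mulVec_mulVec]

theorem mul_inv_conjTranspose_mul_self {A : Matrix n n ℝ} (hA : IsUnit A) :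
    A * (Aᴴ * A)⁻¹ = A⁻¹ᴴ := by
  rw [Matrix.mul_inv_rev, ← Matrix.mul_assoc, mul_nonsing_inv _ ((isUnit_iff_isUnit_det A).1 hA),
    Matrix.one_mul, conjTranspose_nonsing_inv]

end FundamentalSolution

theorem hasDerivWithinAt_integral_Icc {E : Type*} [NormedAddCommGroup E] [NormedSpace ℝ E]
    [CompleteSpace E] {f : ℝ → E} {a b t : ℝ} (hf : ContinuousOn f (Icc a b)) (ht : t ∈ Icc a b) :
    HasDerivWithinAt (fun u => ∫ x in a..u, f x) (f t) (Icc a b) t :=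
  have : Fact (t ∈ Icc a b) := ⟨ht⟩
  intervalIntegral.integral_hasDerivWithinAt_right
    ((hf.mono (Icc_subset_Icc_right ht.2)).intervalIntegrable_of_Icc ht.1)
    (hf.stronglyMeasurableAtFilter_nhdsWithin measurableSet_Icc t) (hf t ht)

theorem integral_eq_sub_of_hasDerivWithinAt_Icc {E : Type*} [NormedAddCommGroup E]
    [NormedSpace ℝ E] [CompleteSpace E] {f f' : ℝ → E} {a b : ℝ} (hab : a ≤ b)
    (hf : ∀ t ∈ Icc a b, HasDerivWithinAt f (f' t) (Icc a b) t)
    (hint : IntervalIntegrable f' volume a b) :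
    ∫ t in a..b, f' t = f b - f a :=
  intervalIntegral.integral_eq_sub_of_hasDerivAt_of_le hab
    (fun t ht => (hf t ht).continuousWithinAt)
    (fun t ht => (hf t (Ioo_subset_Icc_self ht)).hasDerivAt (Icc_mem_nhds ht.1 ht.2)) hint

theorem aestronglyMeasurable_of_hasDerivWithinAt_Icc {E : Type*} [NormedAddCommGroup E]
    [NormedSpace ℝ E] [CompleteSpace E] {f f' : ℝ → E} {a b : ℝ}
    (hf : ∀ t ∈ Icc a b, HasDerivWithinAt f (f' t) (Icc a b) t) :
    AEStronglyMeasurable f' (volume.restrict (Ioc a b)) := by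
  rw [Measure.restrict_congr_set Ioo_ae_eq_Ioc.symm]
  refine (aestronglyMeasurable_deriv f _).congr ?_
  filter_upwards [ae_restrict_mem measurableSet_Ioo] with t ht
  exact ((hf t (Ioo_subset_Icc_self ht)).hasDerivAt (Icc_mem_nhds ht.1 ht.2)).deriv

theorem abs_dotProduct_le {n : Type*} [Fintype n] (x y : n → ℝ) :
    |x ⬝ᵥ y| ≤ (x ⬝ᵥ x + y ⬝ᵥ y) / 2 := by
  have h₁ : 0 ≤ (x - y) ⬝ᵥ (x - y) := by simpa using dotProduct_star_self_nonneg (x - y)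
  have h₂ : 0 ≤ (x + y) ⬝ᵥ (x + y) := by simpa using dotProduct_star_self_nonneg (x + y)
  simp only [sub_dotProduct, dotProduct_sub, add_dotProduct, dotProduct_add,
    dotProduct_comm y x] at h₁ h₂
  rw [abs_le]
  constructor <;> linarith

theorem IntervalIntegrable.dotProduct_of_continuousOn {n : Type*} [Fintype n]
    {u w : ℝ → n → ℝ} {a b : ℝ} (hab : a ≤ b)
    (hu : AEStronglyMeasurable u (volume.restrict (Ioc a b)))
    (huu : IntervalIntegrable (fun t => u t ⬝ᵥ u t) volume a b) (hw : ContinuousOn w (Icc a b)) :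
    IntervalIntegrable (fun t => u t ⬝ᵥ w t) volume a b := by
  have hww : IntervalIntegrable (fun t => w t ⬝ᵥ w t) volume a b :=
    (hw.dotProduct hw).intervalIntegrable_of_Icc hab
  rw [intervalIntegrable_iff_integrableOn_Ioc_of_le hab] at huu hww ⊢
  refine ((huu.add hww).div_const 2).mono' ?_ (.of_forall fun t => abs_dotProduct_le _ _)
  exact (dotProductBilin ℝ ℝ : (n → ℝ) →ₗ[ℝ] (n → ℝ) →ₗ[ℝ] ℝ).toContinuousBilinearMap
    |>.aestronglyMeasurable_comp₂ hu
      ((hw.mono Ioc_subset_Icc_self).aestronglyMeasurable measurableSet_Ioc)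

theorem add_mulVec_eq_conjTranspose_inv_mulVec {n : Type*} [Fintype n] [DecidableEq n]
    {α S : ℝ → Matrix n n ℝ} {k k' : ℝ → n → ℝ} {a b t : ℝ} (c : n → ℝ) (hab : a < b)
    (hS : ∀ t ∈ Icc a b, HasDerivWithinAt S (-(α t * S t)) (Icc a b) t)
    (hSunit : ∀ t ∈ Icc a b, IsUnit (S t))
    (hk : k = fun t => S t *ᵥ ((∫ s in a..t, ((S s)ᴴ * S s)⁻¹) *ᵥ c))
    (hk' : ∀ t ∈ Icc a b, HasDerivWithinAt k (k' t) (Icc a b) t) (ht : t ∈ Icc a b) :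
    k' t + α t *ᵥ k t = (S t)⁻¹ᴴ *ᵥ c := by
  have hinv := continuousOn_inv_of_hasDerivWithinAt_neg_mul hS hSunit
  have hG : ContinuousOn (fun s => ((S s)ᴴ * S s)⁻¹) (Icc a b) := by
    simp only [Matrix.mul_inv_rev, ← conjTranspose_nonsing_inv]
    exact hinv.mul (continuous_id.matrix_conjTranspose.comp_continuousOn hinv)
  have hg := (hasDerivWithinAt_integral_Icc hG ht).mulVec (hasDerivWithinAt_const t _ c)
  subst hk
  rw [add_mulVec_eq_of_hasDerivWithinAt (uniqueDiffOn_Icc hab t ht) (hS t ht) hg (hk' t ht)]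
  rw [mulVec_zero, zero_add, mulVec_mulVec, mul_inv_conjTranspose_mul_self (hSunit t ht)]

/-- The adjoint of the endpoint map `E₁ h = h 1` on the Cameron–Martin space with the
`α`-inner product `⟨h,k⟩_α = ∫₀¹ (h'+αh)·(k'+αk)` is given by
`(E₁* a) t = S t (∫₀ᵗ (S s)ᴴ S s)⁻¹ ds) (S 1)ᴴ a`, i.e. `⟨h, E₁* a⟩_α = h 1 ⬝ᵥ a`. -/
theorem stmt5 {d : ℕ} (α S : ℝ → Matrix (Fin d) (Fin d) ℝ) (a : Fin d → ℝ)
    (h h' k' : ℝ → Fin d → ℝ)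
    (hα : ContinuousOn α (Set.Icc (0 : ℝ) 1))
    (hS : ∀ t ∈ Set.Icc (0 : ℝ) 1,
      HasDerivWithinAt S (-(α t * S t)) (Set.Icc (0 : ℝ) 1) t)
    (hS0 : S 0 = 1)
    (hh0 : h 0 = 0)
    (hh : ∀ t ∈ Set.Icc (0 : ℝ) 1, HasDerivWithinAt h (h' t) (Set.Icc (0 : ℝ) 1) t)
    (hh2 : IntervalIntegrable (fun t => (h' t) ⬝ᵥ (h' t)) MeasureTheory.volume 0 1)
    (k : ℝ → Fin d → ℝ)
    (hk : k = fun t => S t *ᵥ ((∫ s in (0 : ℝ)..t, ((S s)ᴴ * S s)⁻¹) *ᵥ ((S 1)ᴴ *ᵥ a)))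
    (hk' : ∀ t ∈ Set.Icc (0 : ℝ) 1, HasDerivWithinAt k (k' t) (Set.Icc (0 : ℝ) 1) t) :
    ∫ t in (0 : ℝ)..1, (h' t + α t *ᵥ h t) ⬝ᵥ (k' t + α t *ᵥ k t) = h 1 ⬝ᵥ a := by
  have hSunit : ∀ t ∈ Icc (0 : ℝ) 1, IsUnit (S t) :=
    fun t ht => isUnit_of_hasDerivWithinAt_neg_mul hα hS (hS0 ▸ isUnit_one) ht
  set c := (S 1)ᴴ *ᵥ a
  set w : ℝ → Fin d → ℝ := fun t => (S t)⁻¹ᴴ *ᵥ c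
  have hw : ContinuousOn w (Icc 0 1) :=
    (continuous_id.matrix_conjTranspose.comp_continuousOn
      (continuousOn_inv_of_hasDerivWithinAt_neg_mul hS hSunit)).mulVec continuousOn_const
  have hint : IntervalIntegrable (fun t => (h' t + α t *ᵥ h t) ⬝ᵥ w t) volume 0 1 := by
    have hhc : ContinuousOn h (Icc 0 1) := fun t ht => (hh t ht).continuousWithinAt
    simp only [add_dotProduct]
    exact (IntervalIntegrable.dotProduct_of_continuousOn zero_le_one
      (aestronglyMeasurable_of_hasDerivWithinAt_Icc hh) hh2 hw).add
      (((hα.mulVec hhc).dotProduct hw).intervalIntegrable_of_Icc zero_le_one)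
  calc ∫ t in (0 : ℝ)..1, (h' t + α t *ᵥ h t) ⬝ᵥ (k' t + α t *ᵥ k t)
      = ∫ t in (0 : ℝ)..1, (h' t + α t *ᵥ h t) ⬝ᵥ w t :=
        intervalIntegral.integral_congr fun t ht => by
          rw [uIcc_of_le zero_le_one] at ht
          simp only [add_mulVec_eq_conjTranspose_inv_mulVec c zero_lt_one hS hSunit hk hk' ht, w]
    _ = ((S 1)⁻¹ *ᵥ h 1) ⬝ᵥ c - ((S 0)⁻¹ *ᵥ h 0) ⬝ᵥ c := by
        refine integral_eq_sub_of_hasDerivWithinAt_Icc (f := fun t => ((S t)⁻¹ *ᵥ h t) ⬝ᵥ c)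
          zero_le_one (fun t ht => ?_) hint
        refine ((hasDerivWithinAt_inv_mulVec (hS t ht) (hSunit t ht) (hh t ht)).dotProduct
          (hasDerivWithinAt_const t _ c)).congr_deriv ?_
        rw [dotProduct_zero, zero_add, dotProduct_comm]
        simp only [w, conjTranspose_eq_transpose_of_trivial, dotProduct_transpose_mulVec]
    _ = h 1 ⬝ᵥ a := by
        have hS1 := (isUnit_iff_isUnit_det _).1 (hSunit 1 (right_mem_Icc.2 zero_le_one))
        simp [c, hh0, dotProduct_transpose_mulVec, mulVec_mulVec, mul_nonsing_inv _ hS1,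
          dotProduct_comm]
end

section
/- Let E₁ : H(ℝ^d) → ℝ^d be the endpoint map on the Cameron–Martin space with the α-inner product, and E₁* its adjoint. Then E₁E₁* = S(1)(∫₀¹ (S(s)*S(s))⁻¹ ds)S(1)*, which is an invertible (positive definite) matrix. -/
open Matrix
open scoped Matrix.Norms.L2Operator

/-!
Along `[0, 1]` the matrix `S` solves the linear equation `S' = -α S` with `S 0 = 1`. If
`S t u = 0`, then `s ↦ S s u` and `0` solve the same linear equation on `[0, t]` and agree at `t`,
so by uniqueness `u = S 0 u = 0`: every `S t` is invertible. Hence the Gram matrices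
`(S s)ᴴ S s` and their inverses are positive definite and continuous in `s`, so their integral is
positive definite, and so is its congruence by the invertible `S 1`.
-/

open Set MeasureTheory

theorem LinearMap.intervalIntegral_comp_comm {E F : Type*} [NormedAddCommGroup E]
    [NormedSpace ℝ E] [FiniteDimensional ℝ E] [NormedAddCommGroup F] [NormedSpace ℝ F]
    [CompleteSpace F] (L : E →ₗ[ℝ] F) {g : ℝ → E} {a b : ℝ} (hg : IntervalIntegrable g volume a b) :
    ∫ s in a..b, L (g s) = L (∫ s in a..b, g s) :=
  (LinearMap.toContinuousLinearMap L).intervalIntegral_comp_comm hg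

theorem linear_ODE_solution_eqOn_zero_of_right {E : Type*} [NormedAddCommGroup E]
    [NormedSpace ℝ E] {A : ℝ → E →L[ℝ] E} {f : ℝ → E} {a b : ℝ}
    (hA : ContinuousOn A (Icc a b))
    (hf : ∀ t ∈ Icc a b, HasDerivWithinAt f (A t (f t)) (Icc a b) t) (hb : f b = 0) :
    EqOn f 0 (Icc a b) := by
  obtain ⟨C, hC⟩ := isCompact_Icc.exists_bound_of_continuousOn hA
  have hlip (t : ℝ) (ht : t ∈ Ioc a b) : LipschitzOnWith C.toNNReal (A t) univ := by
    refine ((A t).lipschitz.weaken ?_).lipschitzOnWith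
    rw [← NNReal.coe_le_coe, coe_nnnorm]
    exact (hC t (Ioc_subset_Icc_self ht)).trans (Real.le_coe_toNNReal C)
  refine ODE_solution_unique_of_mem_Icc_left hlip (fun t ht => (hf t ht).continuousWithinAt)
    (fun t ht => ?_) (fun _ _ => trivial) continuousOn_const (fun t _ => ?_)
    (fun _ _ => trivial) hb
  · exact (hf t (Ioc_subset_Icc_self ht)).mono_of_mem_nhdsWithin
      (Filter.mem_of_superset (Icc_mem_nhdsLE ht.1) (Icc_subset_Icc_right ht.2))
  · rw [Pi.zero_apply, map_zero]
    exact hasDerivWithinAt_const t _ _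

theorem ContinuousOn.matrix_inv {X R n : Type*} [TopologicalSpace X] [Fintype n]
    [DecidableEq n] [Field R] [TopologicalSpace R] [IsTopologicalRing R] [ContinuousInv₀ R]
    {f : X → Matrix n n R} {s : Set X} (hf : ContinuousOn f s)
    (hdet : ∀ x ∈ s, (f x).det ≠ 0) :
    ContinuousOn (fun x => (f x)⁻¹) s := fun x hx =>
  have hinv : ContinuousAt Ring.inverse (f x).det := by
    rw [Ring.inverse_eq_inv']
    exact continuousAt_inv₀ (hdet x hx)
  (continuousAt_matrix_inv (f x) hinv).comp_continuousWithinAt (hf x hx)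

-- `DecidableEq n` is required by the L² operator norm on `Matrix m n ℝ`.
variable {m n : Type*} [Fintype m] [Fintype n] [DecidableEq n]

theorem HasDerivWithinAt.matrix_mulVec {S : ℝ → Matrix m n ℝ} {S' : Matrix m n ℝ}
    {s : Set ℝ} {t : ℝ} (hS : HasDerivWithinAt S S' s t) (u : n → ℝ) :
    HasDerivWithinAt (fun t => S t *ᵥ u) (S' *ᵥ u) s t :=
  (LinearMap.toContinuousLinearMap ((mulVecBilin ℝ ℝ).flip u)).hasFDerivAt (x := S t)
    |>.comp_hasDerivWithinAt t hS

theorem linear_ODE_solution_isUnit_of_left {A S : ℝ → Matrix n n ℝ} {a b : ℝ}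
    (hA : ContinuousOn A (Icc a b))
    (hS : ∀ t ∈ Icc a b, HasDerivWithinAt S (A t * S t) (Icc a b) t) (ha : IsUnit (S a))
    {t : ℝ} (ht : t ∈ Icc a b) : IsUnit (S t) := by
  rw [← mulVec_injective_iff_isUnit, ← coe_mulVecLin, injective_iff_map_eq_zero]
  intro u hu
  let toCLM : Matrix n n ℝ →L[ℝ] (n → ℝ) →L[ℝ] (n → ℝ) :=
    LinearMap.toContinuousLinearMap
      (LinearMap.toContinuousLinearMap.toLinearMap ∘ₗ mulVecBilin ℝ ℝ)
  have hsub : Icc a t ⊆ Icc a b := Icc_subset_Icc_right ht.2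
  have hzero := linear_ODE_solution_eqOn_zero_of_right (A := fun s => toCLM (A s))
    (f := fun s => S s *ᵥ u) (toCLM.continuous.comp_continuousOn (hA.mono hsub))
    (fun s hs => ?_) hu (left_mem_Icc.2 ht.1)
  · exact mulVec_injective_of_isUnit ha (by simpa using hzero)
  · have := ((hS s (hsub hs)).matrix_mulVec u).mono hsub
    rwa [← mulVec_mulVec] at this

theorem Matrix.PosDef.intervalIntegral {g : ℝ → Matrix n n ℝ} {a b : ℝ} (hab : a < b)
    (hg : ContinuousOn g (Icc a b)) (hpd : ∀ s ∈ Icc a b, (g s).PosDef) :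
    (∫ s in a..b, g s).PosDef := by
  have hint : IntervalIntegrable g volume a b := hg.intervalIntegrable_of_Icc hab.le
  refine of_dotProduct_mulVec_pos ?_ fun x hx => ?_
  · rw [IsHermitian, conjTranspose_eq_transpose_of_trivial]
    calc (∫ s in a..b, g s)ᵀ = transposeLinearEquiv n n ℝ ℝ (∫ s in a..b, g s) := rfl
      _ = ∫ s in a..b, (g s)ᵀ := (LinearMap.intervalIntegral_comp_comm _ hint).symm
      _ = ∫ s in a..b, g s := intervalIntegral.integral_congr fun s hs => by
          rw [← conjTranspose_eq_transpose_of_trivial]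
          exact (hpd s (uIcc_of_le hab.le ▸ hs)).isHermitian
  · let q : Matrix n n ℝ →ₗ[ℝ] ℝ :=
      dotProductBilin ℝ ℝ (star x) ∘ₗ (mulVecBilin ℝ ℝ).flip x
    have hq : ContinuousOn (fun s => q (g s)) (Icc a b) :=
      (LinearMap.toContinuousLinearMap q).continuous.comp_continuousOn hg
    calc 0 < ∫ s in a..b, q (g s) :=
          intervalIntegral.intervalIntegral_pos_of_pos_on (hq.intervalIntegrable_of_Icc hab.le)
            (fun s hs => (hpd s (Ioo_subset_Icc_self hs)).dotProduct_mulVec_pos hx) hab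
      _ = star x ⬝ᵥ ((∫ s in a..b, g s) *ᵥ x) := LinearMap.intervalIntegral_comp_comm q hint

/-- With `(E₁* a) t = S t (∫₀ᵗ (SᴴS)⁻¹)(S 1)ᴴ a`, the composition `E₁ E₁*` is the matrix
`Q = S 1 (∫₀¹ ((S s)ᴴ S s)⁻¹ ds) (S 1)ᴴ`, which is positive definite, hence invertible. -/
theorem stmt8 {d : ℕ} (α S : ℝ → Matrix (Fin d) (Fin d) ℝ)
    (hα : ContinuousOn α (Set.Icc (0 : ℝ) 1))
    (hS : ∀ t ∈ Set.Icc (0 : ℝ) 1,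
      HasDerivWithinAt S (-(α t * S t)) (Set.Icc (0 : ℝ) 1) t)
    (hS0 : S 0 = 1)
    (Q : Matrix (Fin d) (Fin d) ℝ)
    (hQ : Q = S 1 * (∫ s in (0 : ℝ)..1, ((S s)ᴴ * S s)⁻¹) * (S 1)ᴴ) :
    (∀ a : Fin d → ℝ,
        S 1 *ᵥ ((∫ s in (0 : ℝ)..1, ((S s)ᴴ * S s)⁻¹) *ᵥ ((S 1)ᴴ *ᵥ a)) = Q *ᵥ a) ∧
      Q.PosDef ∧ IsUnit Q := by
  have hunit (t : ℝ) (ht : t ∈ Icc (0 : ℝ) 1) : IsUnit (S t) :=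
    linear_ODE_solution_isUnit_of_left hα.neg
      (by simpa only [Pi.neg_apply, neg_mul] using hS) (hS0 ▸ isUnit_one) ht
  have hgram (s : ℝ) (hs : s ∈ Icc (0 : ℝ) 1) : ((S s)ᴴ * S s).PosDef :=
    PosDef.conjTranspose_mul_self _ (mulVec_injective_of_isUnit (hunit s hs))
  have hScont : ContinuousOn S (Icc 0 1) := fun t ht => (hS t ht).continuousWithinAt
  have hcont : ContinuousOn (fun s => ((S s)ᴴ * S s)⁻¹) (Icc 0 1) :=
    ContinuousOn.matrix_inv (f := fun s => (S s)ᴴ * S s) (hScont.star.mul hScont)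
      fun s hs => (hgram s hs).det_pos.ne'
  have hint : (∫ s in (0 : ℝ)..1, ((S s)ᴴ * S s)⁻¹).PosDef :=
    PosDef.intervalIntegral zero_lt_one hcont fun s hs => (hgram s hs).inv
  have hQpd : Q.PosDef := hQ ▸ hint.mul_mul_conjTranspose_same
    (vecMul_injective_of_isUnit (hunit 1 (right_mem_Icc.2 zero_le_one)))
  exact ⟨fun a => by rw [hQ, mulVec_mulVec, mulVec_mulVec], hQpd, hQpd.isUnit⟩
end
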